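/- Define u : ℝ² → ℝ² by u(x,y) = (sgn(x) x⁴, x⁴). Then u is C², the gradient Du has rank at most 1 everywhere, and u solves [[Du]]^⊥ Δu = 0 on all of ℝ², yet the image u(ℝ²) = {(t, |t|) : t ∈ ℝ} is not contained in a single affine line of ℝ². -/

import Mathlib

/-!
The map depends on the first coordinate only, `u p = w (p 0)` with `w t = (|t| t³, t⁴)`. Hence
`Du = w'(x) ⊗ e₀` has rank at most one and `Δu = w''(x)`; since `w''(t) = (3/t) w'(t)`, the
Laplacian lies in the range of `Du`. The profile `t ↦ |t| t³` is `C³`, and `u` has the same image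
as `w`, namely the graph of `|·|`, which contains the non-collinear points `(-1, 1)`, `(0, 0)`,
`(1, 1)`.
-/

open Matrix

/-- The orthogonal projection of ℝ^N onto the orthogonal complement of the range of X. -/
noncomputable def perpProj {N n : ℕ} (X : Matrix (Fin N) (Fin n) ℝ)
    (w : EuclideanSpace ℝ (Fin N)) : EuclideanSpace ℝ (Fin N) :=
  (Submodule.orthogonalProjection (LinearMap.range (Matrix.toEuclideanLin X))ᗮ w :
    EuclideanSpace ℝ (Fin N))

/-- The gradient matrix Du(x). -/
noncomputable def gradMatrix {N n : ℕ} (u : EuclideanSpace ℝ (Fin n) → EuclideanSpace ℝ (Fin N))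
    (x : EuclideanSpace ℝ (Fin n)) : Matrix (Fin N) (Fin n) ℝ :=
  Matrix.of fun α i => fderiv ℝ u x (EuclideanSpace.single i 1) α

/-- The Laplacian Δu(x). -/
noncomputable def lapl {N n : ℕ} (u : EuclideanSpace ℝ (Fin n) → EuclideanSpace ℝ (Fin N))
    (x : EuclideanSpace ℝ (Fin n)) : EuclideanSpace ℝ (Fin N) :=
  ∑ i, fderiv ℝ (fun y => fderiv ℝ u y (EuclideanSpace.single i 1)) x (EuclideanSpace.single i 1)

theorem perpProj_eq_zero_of_mem_range {N n : ℕ} {X : Matrix (Fin N) (Fin n) ℝ}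
    {w : EuclideanSpace ℝ (Fin N)} (hw : w ∈ LinearMap.range (Matrix.toEuclideanLin X)) :
    perpProj X w = 0 := by
  simp [perpProj, Submodule.orthogonalProjectionOnto_orthogonal_apply_eq_zero hw]

section FunctionOfOneCoordinate

variable {n N : ℕ} {w w' : ℝ → EuclideanSpace ℝ (Fin N)} {k : Fin n}
  {q : EuclideanSpace ℝ (Fin n)} {v : EuclideanSpace ℝ (Fin N)}

theorem fderiv_comp_apply_coord (hw : HasDerivAt w v (q k)) (e : EuclideanSpace ℝ (Fin n)) :
    fderiv ℝ (fun p : EuclideanSpace ℝ (Fin n) => w (p k)) q e = e k • v := by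
  have h := hw.hasFDerivAt.comp q (PiLp.hasFDerivAt_apply (𝕜 := ℝ) 2 q k)
  rw [Function.comp_def] at h
  simp [h.fderiv]

theorem gradMatrix_comp_coord (hw : HasDerivAt w v (q k)) :
    gradMatrix (fun p => w (p k)) q = vecMulVec v (Pi.single k 1) := by
  ext α i
  simp only [gradMatrix, of_apply, vecMulVec_apply, fderiv_comp_apply_coord hw, PiLp.smul_apply,
    PiLp.single_apply, Pi.single_apply, smul_eq_mul, eq_comm (a := k)]
  split_ifs <;> ring

theorem mem_range_gradMatrix_comp_coord (hw : HasDerivAt w v (q k)) :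
    v ∈ LinearMap.range (Matrix.toEuclideanLin (gradMatrix (fun p => w (p k)) q)) := by
  refine ⟨EuclideanSpace.single k 1, ?_⟩
  ext α
  simp [gradMatrix_comp_coord hw, toLpLin_apply, vecMulVec_apply]

theorem lapl_comp_coord {v' : EuclideanSpace ℝ (Fin N)} (hw : ∀ t, HasDerivAt w (w' t) t)
    (hw' : HasDerivAt w' v' (q k)) :
    lapl (fun p => w (p k)) q = v' := by
  have hterm (i : Fin n) :
      fderiv ℝ (fun p => fderiv ℝ (fun p : EuclideanSpace ℝ (Fin n) => w (p k)) p
        (EuclideanSpace.single i 1)) q (EuclideanSpace.single i 1) =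
      ((EuclideanSpace.single i (1 : ℝ)) k * (EuclideanSpace.single i (1 : ℝ)) k) • v' := by
    simp only [fderiv_comp_apply_coord (hw _)]
    exact (fderiv_comp_apply_coord (hw'.const_smul (EuclideanSpace.single i (1 : ℝ) k)) _).trans
      (smul_smul _ _ _)
  simp [lapl, hterm, PiLp.single_apply]

end FunctionOfOneCoordinate

theorem hasDerivAt_abs_mul_pow (m : ℕ) (x : ℝ) :
    HasDerivAt (fun y : ℝ => |y| * y ^ (m + 1)) ((m + 2) * (|x| * x ^ m)) x := by
  rcases eq_or_ne x 0 with rfl | hx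
  · rw [hasDerivAt_iff_isLittleO_nhds_zero]
    refine ((Asymptotics.isLittleO_pow_id (𝕜 := ℝ) (n := m + 2) (by omega)).norm_left.congr_left
      fun h => ?_).of_norm_left
    simp only [zero_add, abs_zero, zero_mul, mul_zero, sub_zero, smul_zero, norm_mul, norm_pow,
      Real.norm_eq_abs, abs_abs]
    ring
  · refine ((hasDerivAt_abs hx).mul (hasDerivAt_pow (m + 1) x)).congr_deriv ?_
    rw [← sign_mul_self x]
    push_cast
    ring

theorem contDiff_abs_mul_pow (m : ℕ) : ContDiff ℝ (m + 1) (fun y : ℝ => |y| * y ^ (m + 1)) := by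
  induction m with
  | zero =>
    refine contDiff_one_iff_deriv.2 ⟨fun x => (hasDerivAt_abs_mul_pow 0 x).differentiableAt, ?_⟩
    simp only [funext fun x => (hasDerivAt_abs_mul_pow 0 x).deriv]
    fun_prop
  | succ m ih =>
    refine contDiff_succ_iff_deriv.2 ⟨fun x => (hasDerivAt_abs_mul_pow (m + 1) x).differentiableAt,
      by simp, ?_⟩
    simp only [funext fun x => (hasDerivAt_abs_mul_pow (m + 1) x).deriv]
    push_cast
    exact contDiff_const.mul ih

theorem abs_abs_mul_pow_three (x : ℝ) : |(|x| * x ^ 3)| = x ^ 4 := by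
  rw [abs_mul, abs_abs, abs_pow, ← pow_succ', Even.pow_abs ⟨2, rfl⟩]

theorem abs_mul_pow_three_surjective : Function.Surjective fun x : ℝ => |x| * x ^ 3 := by
  have hnonneg (t : ℝ) (ht : 0 ≤ t) : |t ^ (4⁻¹ : ℝ)| * (t ^ (4⁻¹ : ℝ)) ^ 3 = t := by
    rw [abs_of_nonneg (by positivity), ← pow_succ']
    exact_mod_cast Real.rpow_inv_natCast_pow ht four_ne_zero
  intro t
  rcases le_total 0 t with ht | ht
  · exact ⟨_, hnonneg t ht⟩
  · refine ⟨-(-t) ^ (4⁻¹ : ℝ), ?_⟩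
    simp only [abs_neg, Odd.neg_pow (by decide : Odd 3), mul_neg, hnonneg (-t) (by linarith),
      neg_neg]

theorem hasDerivAt_toLp_vec2 {f g : ℝ → ℝ} {f' g' x : ℝ} (hf : HasDerivAt f f' x)
    (hg : HasDerivAt g g' x) : HasDerivAt (fun t => !₂[f t, g t]) !₂[f', g'] x := by
  have h : HasDerivAt (fun t => ![f t, g t]) ![f', g'] x := by
    rw [hasDerivAt_pi]
    intro i
    fin_cases i
    · exact hf
    · exact hg
  exact (PiLp.hasFDerivAt_toLp (𝕜 := ℝ) 2 _).comp_hasDerivAt x h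

noncomputable def quarticProfile (t : ℝ) : EuclideanSpace ℝ (Fin 2) := !₂[|t| * t ^ 3, t ^ 4]

theorem hasDerivAt_quarticProfile (t : ℝ) :
    HasDerivAt quarticProfile !₂[4 * (|t| * t ^ 2), 4 * t ^ 3] t := by
  refine hasDerivAt_toLp_vec2 ?_ ?_
  · exact_mod_cast hasDerivAt_abs_mul_pow 2 t
  · exact_mod_cast hasDerivAt_pow 4 t

theorem hasDerivAt_deriv_quarticProfile (t : ℝ) :
    HasDerivAt (fun s => !₂[4 * (|s| * s ^ 2), 4 * s ^ 3]) !₂[12 * (|t| * t), 12 * t ^ 2] t := by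
  refine hasDerivAt_toLp_vec2 ?_ ?_
  · exact ((hasDerivAt_abs_mul_pow 1 t).const_mul 4).congr_deriv (by push_cast; ring)
  · exact ((hasDerivAt_pow 3 t).const_mul 4).congr_deriv (by push_cast; ring)

theorem mem_span_deriv_quarticProfile (t : ℝ) :
    !₂[12 * (|t| * t), 12 * t ^ 2] ∈ ℝ ∙ !₂[4 * (|t| * t ^ 2), 4 * t ^ 3] := by
  -- at `t = 0` both vectors vanish, so the junk value `3 / 0 = 0` is a valid coefficient there
  refine Submodule.mem_span_singleton.2 ⟨3 / t, ?_⟩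
  rw [← WithLp.toLp_smul, smul_cons, smul_cons, smul_empty, smul_eq_mul, smul_eq_mul]
  rcases eq_or_ne t 0 with rfl | ht
  · simp
  · rw [show 3 / t * (4 * (|t| * t ^ 2)) = 12 * (|t| * t) by field_simp; ring,
      show 3 / t * (4 * t ^ 3) = 12 * t ^ 2 by field_simp; ring]

theorem contDiff_quarticProfile : ContDiff ℝ 3 quarticProfile := by
  rw [contDiff_euclidean, Fin.forall_fin_two]
  exact ⟨contDiff_abs_mul_pow 2, contDiff_id.pow 4⟩

theorem range_quarticProfile :
    Set.range quarticProfile = Set.range fun t : ℝ => !₂[t, |t|] := by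
  have h : quarticProfile = (fun t : ℝ => !₂[t, |t|]) ∘ fun x => |x| * x ^ 3 := by
    ext x : 1
    simp only [quarticProfile, Function.comp_apply, abs_abs_mul_pow_three]
  rw [h, abs_mul_pow_three_surjective.range_comp]

theorem not_exists_line_forall_graph_abs :
    ¬ ∃ c v : EuclideanSpace ℝ (Fin 2), ∀ t : ℝ, ∃ s : ℝ, !₂[t, |t|] = c + s • v := by
  rintro ⟨c, v, h⟩
  obtain ⟨s₀, h₀⟩ := h 0
  obtain ⟨s₁, h₁⟩ := h 1
  obtain ⟨s₂, h₂⟩ := h (-1)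
  have coord (t s : ℝ) (h : !₂[t, |t|] = c + s • v) : t = c 0 + s * v 0 ∧ |t| = c 1 + s * v 1 :=
    ⟨by simpa using congrArg (· 0) h, by simpa using congrArg (· 1) h⟩
  obtain ⟨e₀, e₀'⟩ := coord _ _ h₀
  obtain ⟨e₁, e₁'⟩ := coord _ _ h₁
  obtain ⟨e₂, e₂'⟩ := coord _ _ h₂
  norm_num at e₀ e₀' e₁ e₁' e₂ e₂'
  nlinarith

/-- the map u(x,y) = (sgn(x)x⁴, x⁴) (note sgn(x)x⁴ = |x|·x³) is C²,
has rank-one gradient, solves [[Du]]^⊥Δu = 0 on ℝ², its image is {(t,|t|) : t ∈ ℝ},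
yet its image is not contained in a single affine line. -/
theorem stmt7 (u : EuclideanSpace ℝ (Fin 2) → EuclideanSpace ℝ (Fin 2))
    (hu : u = fun p => (WithLp.toLp 2 ![|p 0| * (p 0) ^ 3, (p 0) ^ 4] : EuclideanSpace ℝ (Fin 2))) :
    ContDiff ℝ 2 u ∧
    (∀ p, (gradMatrix u p).rank ≤ 1) ∧
    (∀ p, perpProj (gradMatrix u p) (lapl u p) = 0) ∧
    Set.range u = Set.range (fun t : ℝ => (WithLp.toLp 2 ![t, |t|] : EuclideanSpace ℝ (Fin 2))) ∧
    ¬ ∃ c v : EuclideanSpace ℝ (Fin 2), ∀ p, ∃ s : ℝ, u p = c + s • v := by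
  obtain rfl : u = fun p => quarticProfile (p 0) := hu
  have hrange : Set.range (fun p : EuclideanSpace ℝ (Fin 2) => quarticProfile (p 0)) =
      Set.range fun t : ℝ => !₂[t, |t|] :=
    (Function.Surjective.range_comp (f := fun p : EuclideanSpace ℝ (Fin 2) => p 0)
      (fun t => ⟨EuclideanSpace.single 0 t, by simp⟩) quarticProfile).trans range_quarticProfile
  refine ⟨?_, fun p => ?_, fun p => ?_, hrange, ?_⟩
  · exact (contDiff_quarticProfile.of_le (by norm_num)).comp (contDiff_piLp_apply 2)
  · rw [gradMatrix_comp_coord (hasDerivAt_quarticProfile _)]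
    exact rank_vecMulVec_le _ _
  · rw [lapl_comp_coord hasDerivAt_quarticProfile (hasDerivAt_deriv_quarticProfile _)]
    have hDu := mem_range_gradMatrix_comp_coord (k := 0) (q := p) (hasDerivAt_quarticProfile _)
    exact perpProj_eq_zero_of_mem_range
      ((Submodule.span_singleton_le_iff_mem _ _).2 hDu (mem_span_deriv_quarticProfile _))
  · rintro ⟨c, v, h⟩
    refine not_exists_line_forall_graph_abs ⟨c, v, fun t => ?_⟩
    obtain ⟨p, hp⟩ : !₂[t, |t|] ∈ Set.range fun p : EuclideanSpace ℝ (Fin 2) =>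
        quarticProfile (p 0) := hrange ▸ ⟨t, rfl⟩
    exact hp ▸ h p
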